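/- If G is a finite connected graph rooted at a vertex r, the number of acyclic orientations of G whose unique source is r equals T_G(1,0), the evaluation of the Tutte polynomial at (1,0). -/

import Mathlib

open Finset

noncomputable section
open scoped Classical

/-- Set partitions of a finite type, as finpartitions of `Finset.univ`. -/
abbrev SetPart (β : Type) [Fintype β] [DecidableEq β] := Finpartition (Finset.univ : Finset β)

instance finpartitionFintype {β : Type} [Fintype β] [DecidableEq β] (s : Finset β) :
    Fintype (Finpartition s) :=
  Fintype.ofInjective Finpartition.parts fun a b h => by cases a; cases b; cases h; rfl

/-- The one-block partition `1̂`, the maximal element of the partition lattice. -/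
def onePart (β : Type) [Fintype β] [DecidableEq β] : SetPart β :=
  Finpartition.ofErase {Finset.univ} (Finset.supIndep_singleton _ _) Finset.sup_singleton

/-- The Möbius function of a finite poset, via Philip Hall's theorem:
`μ(a,b) = ∑ₖ (-1)^k · #{chains a = x₀ < x₁ < ⋯ < x_k = b}`. -/
def mob {α : Type} [Fintype α] [PartialOrder α] (a b : α) : ℤ :=
  ∑ k ∈ Finset.range (Fintype.card α + 1), (-1) ^ k *
    ((Finset.univ : Finset (Fin (k + 1) → α)).filter
      (fun c => c 0 = a ∧ c (Fin.last k) = b ∧ ∀ i : Fin k, c i.castSucc < c i.succ)).card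

/-- Two blocks `b`, `c` cross: there are `i < k < j < l` with `i, j ∈ b` and `k, l ∈ c`. -/
def Crosses {α : Type} [LinearOrder α] [DecidableEq α] (b c : Finset α) : Prop :=
  ∃ i ∈ b, ∃ j ∈ b, ∃ k ∈ c, ∃ l ∈ c, i < k ∧ k < j ∧ j < l

/-- Number of crossings among a collection of blocks (for a matching, each crossing
is counted exactly once, since exactly one of the two orders crosses). -/
def croPairs {α : Type} [LinearOrder α] [DecidableEq α] (P : Finset (Finset α)) : ℕ :=
  ((P ×ˢ P).filter fun p => Crosses p.1 p.2).card

/-- A matching: a set partition all of whose blocks have size `2`. -/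
def IsMatching {β : Type} [DecidableEq β] {s : Finset β} (σ : Finpartition s) : Prop :=
  ∀ b ∈ σ.parts, b.card = 2

/-- Number of crossings of `σ`. -/
def cro {β : Type} [LinearOrder β] [DecidableEq β] {s : Finset β} (σ : Finpartition s) : ℕ :=
  croPairs σ.parts

/-- `cro(σ,π)`: the number of crossings of `σ` whose four points lie in one block of `π`. -/
def cro2 {β : Type} [LinearOrder β] [Fintype β] [DecidableEq β] (σ π : SetPart β) : ℕ :=
  ((σ.parts ×ˢ σ.parts).filter fun p =>
    Crosses p.1 p.2 ∧ ∃ B ∈ π.parts, p.1 ∪ p.2 ⊆ B).card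

/-- `P` is (the set of blocks of) a matching of the finite set `b`. -/
def IsMatchingOn {β : Type} [DecidableEq β] (P : Finset (Finset β)) (b : Finset β) : Prop :=
  (∀ c ∈ P, c.card = 2) ∧ (P : Set (Finset β)).PairwiseDisjoint id ∧ P.sup id = b

/-- Matching generating polynomial of a finite set `s`, by number of crossings. -/
def mGen {β : Type} [LinearOrder β] [Fintype β] [DecidableEq β] (s : Finset β) : Polynomial ℤ :=
  ∑ σ ∈ (Finset.univ : Finset (Finpartition s)).filter (fun σ => IsMatching σ),
    Polynomial.X ^ cro σ

/-- The moment `m_k(q)` of the `q`-semicircular law: number of matchings of `{1, …, k}`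
counted by crossings (zero for `k` odd). -/
def mNat (k : ℕ) : Polynomial ℤ := mGen (Finset.univ : Finset (Fin k))

/-- `I` is an interval. -/
def IsInterval {β : Type} [LinearOrder β] (I : Finset β) : Prop :=
  ∀ a ∈ I, ∀ b ∈ I, ∀ c, a ≤ c → c ≤ b → c ∈ I

/-- A connected set partition: no proper nonempty interval is a union of blocks. -/
def IsConnectedP {β : Type} [LinearOrder β] [Fintype β] [DecidableEq β] (π : SetPart β) : Prop :=
  ∀ I : Finset β, I.Nonempty → I ≠ Finset.univ → IsInterval I →
    ¬ (∀ b ∈ π.parts, b ⊆ I ∨ Disjoint b I)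

/-- The crossing graph of a set partition: vertices are the blocks,
edges are the crossing pairs of blocks. -/
def crossGraph {β : Type} [LinearOrder β] [DecidableEq β] {s : Finset β} (σ : Finpartition s) :
    SimpleGraph {b // b ∈ σ.parts} where
  Adj b c := b ≠ c ∧ (Crosses b.1 c.1 ∨ Crosses c.1 b.1)
  symm := ⟨fun _ _ h => ⟨h.1.symm, h.2.symm⟩⟩
  loopless := ⟨fun _ h => h.1 rfl⟩

/-- The Tutte polynomial of a simple graph, evaluated at `(x, y)`, via the
Whitney rank sum `T_G(x,y) = ∑_{A ⊆ E} (x-1)^(r(E) - r(A)) (y-1)^(|A| - r(A))`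
where `r(A) = |V| - #components of (V, A)`. -/
def tutteG {V : Type} [Fintype V] {R : Type} [CommRing R] (G : SimpleGraph V) (x y : R) : R :=
  letI : Fintype G.edgeSet := Fintype.ofFinite _
  let rk : Finset (Sym2 V) → ℕ := fun A =>
    Fintype.card V - Nat.card (SimpleGraph.fromEdgeSet (↑A : Set (Sym2 V))).ConnectedComponent
  ∑ A ∈ G.edgeSet.toFinset.powerset,
    (x - 1) ^ (rk G.edgeSet.toFinset - rk A) * (y - 1) ^ (A.card - rk A)

/-- The simple graph underlying the edge subset `A` of a multigraph with
edge-endpoint map `ends`. -/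
def mgSimple {V E : Type} (ends : E → Sym2 V) (A : Set E) : SimpleGraph V :=
  SimpleGraph.fromEdgeSet (ends '' A)

/-- Rank of an edge subset of a multigraph. -/
def mgRank {V E : Type} [Fintype V] (ends : E → Sym2 V) (A : Set E) : ℕ :=
  Fintype.card V - Nat.card (mgSimple ends A).ConnectedComponent

/-- The Tutte polynomial of a multigraph (possibly with loops and multiple edges),
via the Whitney rank sum. -/
def tutteM {V E : Type} [Fintype V] [Fintype E] {R : Type} [CommRing R]
    (ends : E → Sym2 V) (x y : R) : R :=
  ∑ A ∈ (Finset.univ : Finset E).powerset,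
    (x - 1) ^ (mgRank ends Set.univ - mgRank ends ↑A) * (y - 1) ^ (A.card - mgRank ends ↑A)

/-- `i(E,π)`: the number of edges both of whose endpoints lie in the same block of `π`. -/
def iE {V E : Type} [Fintype V] [DecidableEq V] [Fintype E] (ends : E → Sym2 V) (π : SetPart V) : ℕ :=
  (Finset.univ.filter fun e : E => ∃ b ∈ π.parts, ∀ v ∈ ends e, v ∈ b).card

/-- `U_G(q) = (q-1)^{-(n-1)} ∑_{π ∈ P(V)} q^{i(E,π)} μ(π, 1̂)`. -/
def Ugraph {V E : Type} [Fintype V] [DecidableEq V] [Fintype E] (ends : E → Sym2 V) (q : ℚ) : ℚ :=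
  ((q - 1) ^ (Fintype.card V - 1))⁻¹ *
    ∑ π : SetPart V, q ^ (iE ends π) * (mob π (onePart V) : ℚ)

/-- `D` is an orientation of the simple graph `G`. -/
def IsOrientation {V : Type} (G : SimpleGraph V) (D : V → V → Prop) : Prop :=
  (∀ a b, D a b → G.Adj a b) ∧ ∀ a b, G.Adj a b → (D a b ↔ ¬ D b a)

/-- An orientation (directed relation) is acyclic. -/
def DAcyclic {V : Type} (D : V → V → Prop) : Prop := ∀ a, ¬ Relation.TransGen D a a

/-- `v` is a source: no incoming edges. -/
def IsSource {V : Type} (D : V → V → Prop) (v : V) : Prop := ∀ u, ¬ D u v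

/-- Every vertex is reachable from `r` by a directed path. -/
def RootConn {V : Type} (D : V → V → Prop) (r : V) : Prop :=
  ∀ v, Relation.ReflTransGen D r v

/-- The classical cumulants `k_N(q)` of the `q`-semicircular law, via Möbius inversion:
`k_N(q) = ∑_{π ∈ P(N)} m_π(q) μ(π, 1̂)`. -/
def kq (N : ℕ) : Polynomial ℤ :=
  ∑ π : SetPart (Fin N), (∏ b ∈ π.parts, mNat b.card) * Polynomial.C (mob π (onePart (Fin N)))

/-- Formal logarithm of a power series (with constant term `1`):
`log F = ∑_{k ≥ 1} (-1)^(k+1) (F-1)^k / k`. -/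
def pslog {R : Type} [CommRing R] [Algebra ℚ R] (F : PowerSeries R) : PowerSeries R :=
  PowerSeries.mk fun n => ∑ k ∈ Finset.range (n + 1),
    ((-1) ^ (k + 1) / k : ℚ) • (PowerSeries.coeff (R := R) n ((F - 1) ^ k))

/-- A noncrossing set partition. -/
def IsNC {β : Type} [LinearOrder β] [Fintype β] [DecidableEq β] (π : SetPart β) : Prop :=
  ∀ b ∈ π.parts, ∀ c ∈ π.parts, b ≠ c → ¬ Crosses b c

/-- The poset of noncrossing partitions, as a subposet of the partition lattice. -/
abbrev NCPart (β : Type) [LinearOrder β] [Fintype β] [DecidableEq β] := {π : SetPart β // IsNC π}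

/-- The one-block partition as a noncrossing partition. -/
def ncTop (β : Type) [LinearOrder β] [Fintype β] [DecidableEq β] : NCPart β :=
  ⟨onePart β, by
    intro b hb c hc hne
    exfalso; apply hne
    have hb' : b ∈ ({(Finset.univ : Finset β)} : Finset (Finset β)).erase ⊥ := hb
    have hc' : c ∈ ({(Finset.univ : Finset β)} : Finset (Finset β)).erase ⊥ := hc
    rw [Finset.mem_singleton.mp (Finset.mem_of_mem_erase hb'),
      Finset.mem_singleton.mp (Finset.mem_of_mem_erase hc')]⟩

/-- The free cumulants `c_N(q)`, via noncrossing Möbius inversion: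
`c_N(q) = ∑_{π ∈ NC(N)} m_π(q) μ^{NC}(π, 1̂)`. -/
def cq (N : ℕ) : Polynomial ℤ :=
  ∑ π : NCPart (Fin N), (∏ b ∈ π.1.parts, mNat b.card) * Polynomial.C (mob π (ncTop (Fin N)))

/-- Moments of the free Poisson law: `m_k(λ) = ∑_{π ∈ NC(k)} λ^{#π}`. -/
def mP (k : ℕ) : Polynomial ℚ := ∑ π : NCPart (Fin k), Polynomial.X ^ π.1.parts.card


-- ===== auxiliary development for Greene–Zaslavsky =====
section GZaux
set_option linter.unusedSectionVars false
set_option linter.unusedVariables false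
set_option maxHeartbeats 1600000
open SimpleGraph

section rel

variable {α : Type}

lemma no_transgen_into {D : α → α → Prop} {r : α} (hs : IsSource D r) (a : α) :
    ¬ Relation.TransGen D a r := by
  intro h
  cases h with
  | single h => exact hs _ h
  | tail _ h => exact hs _ h

lemma transgen_avoid {D : α → α → Prop} {r : α} (hs : IsSource D r) {a b : α}
    (h : Relation.TransGen D a b) (ha : a ≠ r) :
    Relation.TransGen (fun x y => D x y ∧ x ≠ r ∧ y ≠ r) a b ∧ b ≠ r := by
  induction h with
  | @single b hab =>
    have hb : b ≠ r := fun hb => hs _ (hb ▸ hab)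
    exact ⟨Relation.TransGen.single ⟨hab, ha, hb⟩, hb⟩
  | @tail b c hab hbc ih =>
    have hc : c ≠ r := fun hc => hs _ (hc ▸ hbc)
    exact ⟨ih.1.tail ⟨hbc, ih.2, hc⟩, hc⟩

lemma dacyclic_mono {P Q : α → α → Prop} (h : ∀ x y, P x y → Q x y) (hQ : DAcyclic Q) :
    DAcyclic P :=
  fun a ha => hQ a (Relation.TransGen.mono (fun _ _ hxy => h _ _ hxy) _ _ ha)

lemma dacyclic_of_source {D : α → α → Prop} {r : α} (hs : IsSource D r)
    (h : DAcyclic (fun x y => D x y ∧ x ≠ r ∧ y ≠ r)) : DAcyclic D := by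
  intro a ha
  by_cases har : a = r
  · exact no_transgen_into hs a (har ▸ ha)
  · exact h a (transgen_avoid hs ha har).1

lemma rootconn_of_unique [Finite α] {D : α → α → Prop} {r : α} (hac : DAcyclic D)
    (hu : ∀ w, IsSource D w → w = r) : RootConn D r := by
  have hwf : WellFounded (Relation.TransGen D) := by
    haveI : IsTrans α (Relation.TransGen D) := ⟨fun _ _ _ h1 h2 => h1.trans h2⟩
    haveI : IsIrrefl α (Relation.TransGen D) := ⟨hac⟩
    exact Finite.wellFounded_of_trans_of_irrefl _
  intro w
  induction w using hwf.induction with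
  | _ w ih =>
    by_cases hsw : IsSource D w
    · exact (hu w hsw) ▸ Relation.ReflTransGen.refl
    · obtain ⟨u, hu2⟩ := not_forall.mp hsw
      rw [not_not] at hu2
      exact (ih u (Relation.TransGen.single hu2)).tail hu2
end rel


variable {V : Type} [Fintype V]


variable {V : Type} [Fintype V]

/-- edge finset of a graph, mirroring tutteG's definition -/
def ES (G : SimpleGraph V) : Finset (Sym2 V) :=
  letI : Fintype G.edgeSet := Fintype.ofFinite _
  G.edgeSet.toFinset

lemma mem_ES {G : SimpleGraph V} {ε : Sym2 V} : ε ∈ ES G ↔ ε ∈ G.edgeSet := by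
  simp [ES]

def econn {W : Type} (A : Finset (Sym2 W)) : Prop :=
  (SimpleGraph.fromEdgeSet (↑A : Set (Sym2 W))).Connected

def SInt (G : SimpleGraph V) : ℤ :=
  ∑ A ∈ (ES G).powerset, if econn A then (-1)^A.card else 0

lemma card_cc_bot : Nat.card (⊥ : SimpleGraph V).ConnectedComponent = Fintype.card V := by
  rw [← Nat.card_eq_fintype_card]
  refine (Nat.card_eq_of_bijective (SimpleGraph.connectedComponentMk ⊥) ⟨?_, ?_⟩).symm
  · intro a b h
    exact (SimpleGraph.reachable_bot).mp (SimpleGraph.ConnectedComponent.exact h)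
  · exact fun c => SimpleGraph.ConnectedComponent.ind (fun v => ⟨v, rfl⟩) c

lemma card_cc_pos [Nonempty V] (H : SimpleGraph V) : 1 ≤ Nat.card H.ConnectedComponent :=
  Nat.one_le_iff_ne_zero.mpr (Nat.card_ne_zero.mpr ⟨⟨H.connectedComponentMk (Classical.arbitrary V)⟩, inferInstance⟩)

lemma card_cc_le (H : SimpleGraph V) : Nat.card H.ConnectedComponent ≤ Fintype.card V := by
  rw [← Nat.card_eq_fintype_card]
  exact Nat.card_le_card_of_surjective _
    (fun c => SimpleGraph.ConnectedComponent.ind (fun v => ⟨v, rfl⟩) c)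

lemma connected_iff_card [Nonempty V] (H : SimpleGraph V) :
    H.Connected ↔ Nat.card H.ConnectedComponent = 1 := by
  constructor
  · intro h
    rw [Nat.card_eq_one_iff_unique]
    refine ⟨⟨?_⟩, ⟨H.connectedComponentMk (Classical.arbitrary V)⟩⟩
    exact SimpleGraph.ConnectedComponent.ind₂ fun v w => ConnectedComponent.eq.mpr (h v w)
  · intro h
    have hs := (Nat.card_eq_one_iff_unique.mp h).1
    refine ⟨fun v w => ?_⟩
    exact ConnectedComponent.exact (Subsingleton.elim _ _)

/-- adding one edge decreases the component count by at most one -/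
lemma card_cc_insert (s : Set (Sym2 V)) (e : Sym2 V) :
    Nat.card (fromEdgeSet s).ConnectedComponent ≤
      Nat.card (fromEdgeSet (insert e s)).ConnectedComponent + 1 := by
  induction e with
  | h u w =>
  set H := fromEdgeSet s with hH
  set H' := fromEdgeSet (insert s(u,w) s) with hH'
  have hle : H ≤ H' := fromEdgeSet_mono (Set.subset_insert _ _)
  have hreach : ∀ x y : V, H'.Reachable x y → H.Reachable x y ∨
      ((H.Reachable x u ∨ H.Reachable x w) ∧ (H.Reachable y u ∨ H.Reachable y w)) := by
    intro x y hxy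
    obtain ⟨p⟩ := hxy
    induction p with
    | nil => exact Or.inl (Reachable.refl _)
    | @cons x z y hadj p ih =>
      rw [hH', fromEdgeSet_adj] at hadj
      obtain ⟨hmem, hne⟩ := hadj
      rcases Set.mem_insert_iff.mp hmem with heq | hmem'
      · have hcase : (x = u ∧ z = w) ∨ (x = w ∧ z = u) := Sym2.eq_iff.mp heq
        have hRx : H.Reachable x u ∨ H.Reachable x w := by
          rcases hcase with ⟨h1, _⟩ | ⟨h1, _⟩
          · exact Or.inl (h1 ▸ Reachable.refl _)
          · exact Or.inr (h1 ▸ Reachable.refl _)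
        have hRz : H.Reachable z u ∨ H.Reachable z w := by
          rcases hcase with ⟨_, h2⟩ | ⟨_, h2⟩
          · exact Or.inr (h2 ▸ Reachable.refl _)
          · exact Or.inl (h2 ▸ Reachable.refl _)
        refine Or.inr ⟨hRx, ?_⟩
        rcases ih with hzy | ⟨_, hy⟩
        · rcases hRz with h | h
          · exact Or.inl (hzy.symm.trans h)
          · exact Or.inr (hzy.symm.trans h)
        · exact hy
      · have hadjH : H.Adj x z := by rw [hH, fromEdgeSet_adj]; exact ⟨hmem', hne⟩
        rcases ih with hzy | ⟨hz, hy⟩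
        · exact Or.inl (hadjH.reachable.trans hzy)
        · refine Or.inr ⟨?_, hy⟩
          rcases hz with h | h
          · exact Or.inl (hadjH.reachable.trans h)
          · exact Or.inr (hadjH.reachable.trans h)
  -- injection CC H → CC H' ⊕ Unit
  classical
  let fhom : H →g H' := SimpleGraph.Hom.ofLE hle
  let F : H.ConnectedComponent → H'.ConnectedComponent ⊕ Unit := fun c =>
    if c = H.connectedComponentMk w then Sum.inr () else Sum.inl (c.map fhom)
  have hinj : Function.Injective F := by
    intro c₁ c₂ hF
    revert hF
    refine SimpleGraph.ConnectedComponent.ind₂ (fun x y => ?_) c₁ c₂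
    intro hF
    by_cases h1 : H.connectedComponentMk x = H.connectedComponentMk w <;>
      by_cases h2 : H.connectedComponentMk y = H.connectedComponentMk w
    · rw [h1, h2]
    · simp only [F, if_pos h1, if_neg h2] at hF; cases hF
    · simp only [F, if_neg h1, if_pos h2] at hF; cases hF
    · simp only [F, if_neg h1, if_neg h2, Sum.inl.injEq] at hF
      rw [ConnectedComponent.map_mk, ConnectedComponent.map_mk] at hF
      have hxy : H'.Reachable x y := ConnectedComponent.exact hF
      rcases hreach x y hxy with h | ⟨hx, hy⟩
      · exact ConnectedComponent.eq.mpr h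
      · rcases hx with hx | hx
        · rcases hy with hy | hy
          · exact ConnectedComponent.eq.mpr (hx.trans hy.symm)
          · exact absurd (ConnectedComponent.eq.mpr hy) h2
        · exact absurd (ConnectedComponent.eq.mpr hx) h1
  calc Nat.card H.ConnectedComponent ≤ Nat.card (H'.ConnectedComponent ⊕ Unit) :=
        Nat.card_le_card_of_injective F hinj
    _ = Nat.card H'.ConnectedComponent + 1 := by
        rw [Nat.card_sum]; simp

lemma card_le_card_add_cc (A : Finset (Sym2 V)) :
    Fintype.card V ≤ A.card + Nat.card (fromEdgeSet (↑A : Set (Sym2 V))).ConnectedComponent := by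
  induction A using Finset.induction with
  | empty =>
    simp only [Finset.card_empty, Finset.coe_empty, SimpleGraph.fromEdgeSet_empty, zero_add,
      card_cc_bot]
    exact le_rfl
  | @insert e A he ih =>
    have h2 := card_cc_insert (↑A : Set (Sym2 V)) e
    have : (↑(insert e A) : Set (Sym2 V)) = insert e ↑A := by simp
    rw [Finset.card_insert_of_notMem he, this]
    omega


theorem tutte_eval (G : SimpleGraph V) (hG : G.Connected) :
    tutteG G (1:ℤ) 0 = (-1)^(Fintype.card V - 1) * SInt G := by
  haveI : Nonempty V := hG.nonempty
  set n := Fintype.card V with hn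
  have hcoe : (↑(ES G) : Set (Sym2 V)) = G.edgeSet := by ext x; simp [ES]
  have hfull : Nat.card (fromEdgeSet (↑(ES G) : Set (Sym2 V))).ConnectedComponent = 1 := by
    rw [hcoe, fromEdgeSet_edgeSet]
    exact (connected_iff_card G).mp hG
  have hstep : tutteG G (1:ℤ) 0 = ∑ A ∈ (ES G).powerset,
      (0:ℤ) ^ ((n - Nat.card (fromEdgeSet (↑(ES G) : Set (Sym2 V))).ConnectedComponent) -
        (n - Nat.card (fromEdgeSet (↑A : Set (Sym2 V))).ConnectedComponent)) *
      (-1) ^ (A.card - (n - Nat.card (fromEdgeSet (↑A : Set (Sym2 V))).ConnectedComponent)) := by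
    unfold tutteG
    norm_num [ES]
    rfl
  rw [hstep, SInt, Finset.mul_sum]
  refine Finset.sum_congr rfl fun A hA => ?_
  rw [Finset.mem_powerset] at hA
  set c := Nat.card (fromEdgeSet (↑A : Set (Sym2 V))).ConnectedComponent with hc
  have hc1 : 1 ≤ c := card_cc_pos _
  have hcn : c ≤ n := card_cc_le _
  rw [hfull]
  by_cases h : econn A
  · have hcA : c = 1 := (connected_iff_card _).mp h
    have hAcard : n - 1 ≤ A.card := by
      have := card_le_card_add_cc (V := V) A
      omega
    rw [if_pos h, hcA]
    have he0 : (n - 1) - (n - 1) = 0 := by omega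
    rw [he0, pow_zero, one_mul]
    have h1 : (-1:ℤ)^(A.card - (n-1)) * (-1)^(n-1) = (-1)^A.card := by
      rw [← pow_add, Nat.sub_add_cancel hAcard]
    have h2 : (-1:ℤ)^(n-1) * (-1)^(n-1) = 1 := by
      rw [← pow_add]
      exact Even.neg_one_pow ⟨n-1, rfl⟩
    calc (-1:ℤ)^(A.card - (n-1))
        = (-1:ℤ)^(A.card - (n-1)) * ((-1)^(n-1) * (-1)^(n-1)) := by rw [h2, mul_one]
      _ = ((-1:ℤ)^(A.card - (n-1)) * (-1)^(n-1)) * (-1)^(n-1) := by ring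
      _ = (-1:ℤ)^A.card * (-1)^(n-1) := by rw [h1]
      _ = (-1:ℤ)^(n-1) * (-1)^A.card := by ring
  · have hcA : 2 ≤ c := by
      by_contra h'
      exact h ((connected_iff_card _).mpr (by omega))
    have hpos : 0 < (n - 1) - (n - c) := by omega
    rw [if_neg h, zero_pow (by omega), zero_mul, mul_zero]


abbrev AOP {V : Type} (G : SimpleGraph V) (r : V) (D : V → V → Prop) : Prop :=
  IsOrientation G D ∧ DAcyclic D ∧ IsSource D r ∧ ∀ v, IsSource D v → v = r

def AOcount {V : Type} (G : SimpleGraph V) (r : V) : ℕ := Nat.card {D : V → V → Prop // AOP G r D}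

def contrG {V : Type} (G : SimpleGraph V) (r v : V) : SimpleGraph {x : V // x ≠ v} where
  Adj a b := a.1 ≠ b.1 ∧ (G.Adj a.1 b.1 ∨ (a.1 = r ∧ G.Adj v b.1) ∨ (b.1 = r ∧ G.Adj a.1 v))
  symm := by
    refine ⟨?_⟩
    rintro a b ⟨h1, h2⟩
    refine ⟨h1.symm, ?_⟩
    rcases h2 with h | ⟨h3, h4⟩ | ⟨h3, h4⟩
    · exact Or.inl h.symm
    · exact Or.inr (Or.inr ⟨h3, h4.symm⟩)
    · exact Or.inr (Or.inl ⟨h3, h4.symm⟩)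
  loopless := ⟨fun a h => h.1 rfl⟩

section recN
variable {V : Type} [Fintype V] {G : SimpleGraph V} {r v : V}

lemma source_out {D : V → V → Prop} {ρ : V} {H : SimpleGraph V}
    (hor : IsOrientation H D) (hs : IsSource D ρ) {x : V} (h : H.Adj ρ x) : D ρ x :=
  (hor.2 ρ x h).mpr (hs x)

def delRel (r v : V) (D : V → V → Prop) : V → V → Prop :=
  fun a b => D a b ∧ ¬(a = r ∧ b = v) ∧ ¬(a = v ∧ b = r)
def addRel (r v : V) (D : V → V → Prop) : V → V → Prop :=
  fun a b => D a b ∨ (a = r ∧ b = v)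
def pushRel (r v : V) (D : V → V → Prop) : {x : V // x ≠ v} → {x : V // x ≠ v} → Prop :=
  fun a' b' => D a'.1 b'.1 ∨ (a'.1 = r ∧ D v b'.1)
def liftRel (G : SimpleGraph V) (r v : V)
    (D' : {x : V // x ≠ v} → {x : V // x ≠ v} → Prop) : V → V → Prop :=
  fun a b => G.Adj a b ∧ (a = r ∨ (a = v ∧ b ≠ r) ∨ ∃ (ha : a ≠ v) (hb : b ≠ v), D' ⟨a,ha⟩ ⟨b,hb⟩)

lemma del_aop {D : V → V → Prop} (hD : AOP G r D) (hQ : ∃ u, u ≠ r ∧ D u v) :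
    AOP (G.deleteEdges {s(r,v)}) r (delRel r v D) := by
  obtain ⟨hor, hac, hsr, huniq⟩ := hD
  refine ⟨⟨?_, ?_⟩, ?_, ?_, ?_⟩
  · rintro a b ⟨hab, h1, h2⟩
    rw [SimpleGraph.deleteEdges_adj]
    refine ⟨hor.1 _ _ hab, ?_⟩
    rw [Set.mem_singleton_iff, Sym2.eq_iff]
    tauto
  · intro a b hab
    rw [SimpleGraph.deleteEdges_adj, Set.mem_singleton_iff, Sym2.eq_iff] at hab
    obtain ⟨hab, hne⟩ := hab
    push_neg at hne
    have hiff := hor.2 a b hab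
    unfold delRel
    tauto
  · exact dacyclic_mono (fun x y h => h.1) hac
  · exact fun u h => hsr u h.1
  · intro w hw
    by_cases hwv : w = v
    · rw [hwv] at hw
      obtain ⟨u, hur, huv⟩ := hQ
      exact absurd ⟨huv, fun h => hur h.1, fun h => (G.ne_of_adj (hor.1 _ _ huv)) h.1⟩ (hw u)
    · by_cases hwr : w = r
      · exact hwr
      · refine huniq w (fun x hx => hw x ⟨hx, ?_, ?_⟩) <;> tauto

lemma add_aop (hrv : G.Adj r v) {D : V → V → Prop} (hD : AOP (G.deleteEdges {s(r,v)}) r D) :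
    AOP G r (addRel r v D) := by
  obtain ⟨hor, hac, hsr, huniq⟩ := hD
  have hne : r ≠ v := G.ne_of_adj hrv
  have hne' : v ≠ r := hne.symm
  have hDrv : ¬ D r v := by
    intro h
    have := hor.1 _ _ h
    rw [SimpleGraph.deleteEdges_adj, Set.mem_singleton_iff] at this
    exact this.2 rfl
  have hDvr : ¬ D v r := hsr v
  have hsrc : IsSource (addRel r v D) r := by
    rintro u (h | ⟨h1, h2⟩)
    · exact hsr u h
    · exact hne h2
  refine ⟨⟨?_, ?_⟩, ?_, hsrc, ?_⟩
  · rintro a b (h | ⟨h1, h2⟩)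
    · exact (SimpleGraph.deleteEdges_le _) (hor.1 _ _ h)
    · subst h1; subst h2; exact hrv
  · intro a b hab
    by_cases hmem : s(a,b) = s(r,v)
    · rw [Sym2.eq_iff] at hmem
      unfold addRel
      rcases hmem with ⟨ha, hb⟩ | ⟨ha, hb⟩ <;> subst ha <;> subst hb <;> tauto
    · have hab' : (G.deleteEdges {s(r,v)}).Adj a b := by
        rw [SimpleGraph.deleteEdges_adj, Set.mem_singleton_iff]
        exact ⟨hab, hmem⟩
      have hiff := hor.2 a b hab'
      have hmem' : ¬ s(b,a) = s(r,v) := by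
        rw [Sym2.eq_swap]; exact hmem
      rw [Sym2.eq_iff] at hmem hmem'
      unfold addRel
      tauto
  · refine dacyclic_of_source hsrc ?_
    refine dacyclic_mono (fun x y h => ?_) hac
    rcases h with ⟨h | ⟨h1, h2⟩, hx, hy⟩
    · exact h
    · exact absurd h1 hx
  · intro w hw
    by_cases hwr : w = r
    · exact hwr
    · exact huniq w fun x hx => hw x (Or.inl hx)

lemma add_Q (hrv : G.Adj r v) {D : V → V → Prop} (hD : AOP (G.deleteEdges {s(r,v)}) r D) :
    ∃ u, u ≠ r ∧ addRel r v D u v := by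
  obtain ⟨hor, hac, hsr, huniq⟩ := hD
  by_cases hsv : IsSource D v
  · exact absurd (huniq v hsv) (G.ne_of_adj hrv).symm
  · obtain ⟨u, hu⟩ := not_forall.mp hsv
    rw [not_not] at hu
    have hur : u ≠ r := by
      intro h; subst h
      have := hor.1 _ _ hu
      rw [SimpleGraph.deleteEdges_adj, Set.mem_singleton_iff] at this
      exact this.2 rfl
    exact ⟨u, hur, Or.inl hu⟩

lemma del_add {D : V → V → Prop} (hD : AOP (G.deleteEdges {s(r,v)}) r D) :
    delRel r v (addRel r v D) = D := by
  obtain ⟨hor, hac, hsr, huniq⟩ := hD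
  funext a b
  apply propext
  simp only [delRel, addRel]
  constructor
  · rintro ⟨h | ⟨h1, h2⟩, h3, h4⟩
    · exact h
    · exact absurd ⟨h1, h2⟩ h3
  · intro h
    have hadj := hor.1 _ _ h
    rw [SimpleGraph.deleteEdges_adj, Set.mem_singleton_iff, Sym2.eq_iff] at hadj
    push_neg at hadj
    exact ⟨Or.inl h, fun hc => hadj.2.1 hc.1 hc.2, fun hc => hadj.2.2 hc.1 hc.2⟩

lemma add_del (hrv : G.Adj r v) {D : V → V → Prop} (hD : AOP G r D) :
    addRel r v (delRel r v D) = D := by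
  obtain ⟨hor, hac, hsr, huniq⟩ := hD
  funext a b
  apply propext
  simp only [delRel, addRel]
  constructor
  · rintro (⟨h, -, -⟩ | ⟨h1, h2⟩)
    · exact h
    · subst h1; subst h2
      exact source_out hor hsr hrv
  · intro h
    by_cases hc : a = r ∧ b = v
    · exact Or.inr hc
    · refine Or.inl ⟨h, hc, ?_⟩
      rintro ⟨h1, h2⟩
      exact hsr a (h2 ▸ h)
lemma lift_into_r (hne : r ≠ v) (D' : {x : V // x ≠ v} → {x : V // x ≠ v} → Prop)
    (hs' : IsSource D' (⟨r, hne⟩ : {x : V // x ≠ v})) :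
    ∀ a, ¬ liftRel G r v D' a r := by
  rintro a ⟨hadj, h | ⟨h1, h2⟩ | ⟨ha, hb, h⟩⟩
  · exact G.loopless.irrefl r (h ▸ hadj)
  · exact h2 rfl
  · exact hs' _ h

lemma lift_into_v (D' : {x : V // x ≠ v} → {x : V // x ≠ v} → Prop) :
    ∀ a, a ≠ r → ¬ liftRel G r v D' a v := by
  rintro a har ⟨hadj, h | ⟨h1, h2⟩ | ⟨ha, hb, h⟩⟩
  · exact har h
  · exact G.loopless.irrefl v (h1 ▸ hadj)
  · exact hb rfl

lemma push_aop (hrv : G.Adj r v) {D : V → V → Prop} (hD : AOP G r D)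
    (hQn : ∀ u, D u v → u = r) :
    AOP (contrG G r v) ⟨r, G.ne_of_adj hrv⟩ (pushRel r v D) := by
  obtain ⟨hor, hac, hsr, huniq⟩ := hD
  have hne : r ≠ v := G.ne_of_adj hrv
  have hvout : ∀ w, G.Adj v w → w ≠ r → D v w := fun w hw hwr =>
    (hor.2 v w hw).mpr (fun h => hwr (hQn w h))
  have hrout : ∀ w, G.Adj r w → D r w := fun w hw => source_out hor hsr hw
  have hnotinr : ∀ x' : {x : V // x ≠ v}, ¬ pushRel r v D x' ⟨r, hne⟩ := by
    rintro x' (h | ⟨h1, h2⟩)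
    · exact hsr _ h
    · exact hsr _ h2
  have hDval : ∀ (a' b' : {x : V // x ≠ v}), a'.1 ≠ r →
      (pushRel r v D a' b' ↔ D a'.1 b'.1) := by
    intro a' b' har
    constructor
    · rintro (h | ⟨h1, h2⟩)
      · exact h
      · exact absurd h1 har
    · exact Or.inl
  refine ⟨⟨?_, ?_⟩, ?_, hnotinr, ?_⟩
  · rintro a' b' (h | ⟨h1, h2⟩)
    · exact ⟨(G.ne_of_adj (hor.1 _ _ h)), Or.inl (hor.1 _ _ h)⟩
    · refine ⟨?_, Or.inr (Or.inl ⟨h1, hor.1 _ _ h2⟩)⟩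
      intro hab
      have hbr : b'.1 = r := hab ▸ h1
      exact hsr v (hbr ▸ h2)
  · intro a' b' hadj
    by_cases har : a'.1 = r
    · have hbr : b'.1 ≠ r := fun h => hadj.1 (har.trans h.symm)
      have hfwd : pushRel r v D a' b' := by
        rcases hadj.2 with h | ⟨h1, h2⟩ | ⟨h1, h2⟩
        · refine Or.inl ?_
          rw [har]
          exact hrout b'.1 (har ▸ h)
        · exact Or.inr ⟨har, hvout _ h2 hbr⟩
        · exact absurd h1 hbr
      have ha' : a' = ⟨r, hne⟩ := Subtype.ext har
      rw [ha']
      exact iff_of_true (ha' ▸ hfwd) (hnotinr b')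
    · by_cases hbr : b'.1 = r
      · have hb' : b' = ⟨r, hne⟩ := Subtype.ext hbr
        have hfwd : pushRel r v D b' a' := by
          rcases hadj.symm.2 with h | ⟨h1, h2⟩ | ⟨h1, h2⟩
          · refine Or.inl ?_
            rw [hbr]
            exact hrout a'.1 (hbr ▸ h)
          · exact Or.inr ⟨hbr, hvout _ h2 har⟩
          · exact absurd h1 har
        rw [hb']
        exact iff_of_false (hnotinr a') (not_not_intro (hb' ▸ hfwd))
      · have hGadj : G.Adj a'.1 b'.1 := by
          rcases hadj.2 with h | ⟨h1, h2⟩ | ⟨h1, h2⟩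
          · exact h
          · exact absurd h1 har
          · exact absurd h1 hbr
        rw [hDval a' b' har, hDval b' a' hbr]
        exact hor.2 _ _ hGadj
  · refine dacyclic_of_source hnotinr ?_
    intro a' ha'
    refine hac a'.1 (Relation.TransGen.lift Subtype.val ?_ _ _ ha')
    rintro x' y' ⟨h, hx, hy⟩
    have hxr : x'.1 ≠ r := fun hh => hx (Subtype.ext hh)
    exact (hDval x' y' hxr).mp h
  · intro w' hw'
    by_cases hwr : w'.1 = r
    · exact Subtype.ext hwr
    · exfalso
      have hws : IsSource D w'.1 := by
        intro x hx
        by_cases hxv : x = v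
        · exact hw' ⟨r, hne⟩ (Or.inr ⟨rfl, hxv ▸ hx⟩)
        · exact hw' ⟨x, hxv⟩ (Or.inl hx)
      exact hwr (huniq _ hws)

lemma lift_aop (hrv : G.Adj r v) {D' : {x : V // x ≠ v} → {x : V // x ≠ v} → Prop}
    (hD' : AOP (contrG G r v) ⟨r, G.ne_of_adj hrv⟩ D') :
    AOP G r (liftRel G r v D') := by
  obtain ⟨hor, hac, hsr, huniq⟩ := hD'
  have hne : r ≠ v := G.ne_of_adj hrv
  have hintoR : ∀ a, ¬ liftRel G r v D' a r := lift_into_r hne D' hsr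
  have hintoV : ∀ a, a ≠ r → ¬ liftRel G r v D' a v := lift_into_v D'
  have hred : ∀ (x y : V) (hx : x ≠ v) (hy : y ≠ v), x ≠ r → G.Adj x y →
      (liftRel G r v D' x y ↔ D' ⟨x,hx⟩ ⟨y,hy⟩) := by
    intro x y hx hy hxr hadj
    constructor
    · rintro ⟨-, h | ⟨h1, h2⟩ | ⟨hx', hy', h⟩⟩
      · exact absurd h hxr
      · exact absurd h1 hx
      · exact h
    · intro h
      exact ⟨hadj, Or.inr (Or.inr ⟨hx, hy, h⟩)⟩
  refine ⟨⟨fun a b h => h.1, ?_⟩, ?_, hintoR, ?_⟩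
  · intro a b hab
    by_cases har : a = r
    · refine iff_of_true ⟨hab, Or.inl har⟩ ?_
      rw [har]
      exact hintoR b
    · by_cases hbr : b = r
      · refine iff_of_false ?_ (not_not_intro ⟨hab.symm, Or.inl hbr⟩)
        rw [hbr]
        exact hintoR a
      · by_cases hav : a = v
        · refine iff_of_true ⟨hab, Or.inr (Or.inl ⟨hav, hbr⟩)⟩ ?_
          rw [hav]
          exact hintoV b hbr
        · by_cases hbv : b = v
          · refine iff_of_false ?_ (not_not_intro ⟨hab.symm, Or.inr (Or.inl ⟨hbv, har⟩)⟩)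
            rw [hbv]
            exact hintoV a har
          · rw [hred a b hav hbv har hab, hred b a hbv hav hbr hab.symm]
            exact hor.2 _ _ ⟨G.ne_of_adj hab, Or.inl hab⟩
  · refine dacyclic_of_source hintoR ?_
    have hsv : IsSource (fun x y => liftRel G r v D' x y ∧ x ≠ r ∧ y ≠ r) v := by
      rintro u ⟨h, hur, -⟩
      exact hintoV u hur h
    refine dacyclic_of_source hsv ?_
    intro a ha
    have hlift : ∀ x y, ((fun x y => (liftRel G r v D' x y ∧ x ≠ r ∧ y ≠ r) ∧ x ≠ v ∧ y ≠ v) x y) →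
        D' (if hx : x = v then ⟨r, hne⟩ else ⟨x, hx⟩) (if hy : y = v then ⟨r, hne⟩ else ⟨y, hy⟩) := by
      rintro x y ⟨⟨⟨hadj, hcase⟩, hxr, hyr⟩, hxv, hyv⟩
      rw [dif_neg hxv, dif_neg hyv]
      rcases hcase with h | ⟨h1, -⟩ | ⟨hx', hy', h⟩
      · exact absurd h hxr
      · exact absurd h1 hxv
      · exact h
    exact hac _ (Relation.TransGen.lift (fun x => if hx : x = v then ⟨r, hne⟩ else ⟨x, hx⟩)
      hlift _ _ ha)
  · intro w hw
    by_cases hwr : w = r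
    · exact hwr
    · exfalso
      by_cases hwv : w = v
      · exact hw r (by rw [hwv]; exact ⟨hrv, Or.inl rfl⟩)
      · have hws : IsSource D' ⟨w, hwv⟩ := by
          intro x' hx'
          have hadj' := hor.1 _ _ hx'
          by_cases hxr : x'.1 = r
          · rcases hadj'.2 with h | ⟨h1, h2⟩ | ⟨h1, h2⟩
            · exact hw r ⟨hxr ▸ h, Or.inl rfl⟩
            · exact hw v ⟨h2, Or.inr (Or.inl ⟨rfl, hwr⟩)⟩
            · exact hwr h1
          · have hGadj : G.Adj x'.1 w := by
              rcases hadj'.2 with h | ⟨h1, h2⟩ | ⟨h1, h2⟩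
              · exact h
              · exact absurd h1 hxr
              · exact absurd h1 hwr
            exact hw x'.1 ⟨hGadj, Or.inr (Or.inr ⟨x'.2, hwv, hx'⟩)⟩
        exact hwr (congrArg Subtype.val (huniq _ hws))
lemma push_lift (hrv : G.Adj r v) {D' : {x : V // x ≠ v} → {x : V // x ≠ v} → Prop}
    (hD' : AOP (contrG G r v) ⟨r, G.ne_of_adj hrv⟩ D') :
    pushRel r v (liftRel G r v D') = D' := by
  obtain ⟨hor, hac, hsr, huniq⟩ := hD'
  have hne : r ≠ v := G.ne_of_adj hrv
  funext a' b'
  apply propext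
  obtain ⟨a, hav⟩ := a'
  obtain ⟨b, hbv⟩ := b'
  by_cases hbr : b = r
  · -- everything into r is false on both sides
    have hb' : (⟨b, hbv⟩ : {x : V // x ≠ v}) = ⟨r, hne⟩ := Subtype.ext hbr
    rw [hb']
    refine iff_of_false ?_ (hsr _)
    rintro (h | ⟨h1, h2⟩)
    · exact lift_into_r hne D' hsr a h
    · exact lift_into_r hne D' hsr v h2
  · by_cases har : a = r
    · have ha' : (⟨a, hav⟩ : {x : V // x ≠ v}) = ⟨r, hne⟩ := Subtype.ext har
      rw [ha']
      constructor
      · rintro (h | ⟨h1, h2⟩)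
        · -- liftRel r b  (a = r case)
          obtain ⟨hadj, -⟩ := h
          refine source_out hor hsr ⟨fun hh => hbr hh.symm, Or.inl (har ▸ hadj)⟩
        · obtain ⟨hadj, -⟩ := h2
          refine source_out hor hsr ⟨fun hh => hbr hh.symm, Or.inr (Or.inl ⟨rfl, hadj⟩)⟩
      · intro h
        have hadj' := hor.1 _ _ h
        rcases hadj'.2 with h1 | ⟨h1, h2⟩ | ⟨h1, h2⟩
        · exact Or.inl ⟨h1, Or.inl rfl⟩
        · exact Or.inr ⟨rfl, ⟨h2, Or.inr (Or.inl ⟨rfl, hbr⟩)⟩⟩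
        · exact absurd h1 hbr
    · -- a ∉ {r, v}
      constructor
      · rintro (h | ⟨h1, h2⟩)
        · obtain ⟨hadj, hc⟩ := h
          rcases hc with h1 | ⟨h1, h2⟩ | ⟨hx, hy, h⟩
          · exact absurd h1 har
          · exact absurd h1 hav
          · exact h
        · exact absurd h1 har
      · intro h
        have hadj' := hor.1 _ _ h
        have hGadj : G.Adj a b := by
          rcases hadj'.2 with h1 | ⟨h1, h2⟩ | ⟨h1, h2⟩
          · exact h1
          · exact absurd h1 har
          · exact absurd h1 hbr
        exact Or.inl ⟨hGadj, Or.inr (Or.inr ⟨hav, hbv, h⟩)⟩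

lemma lift_push (hrv : G.Adj r v) {D : V → V → Prop} (hD : AOP G r D)
    (hQn : ∀ u, D u v → u = r) :
    liftRel G r v (pushRel r v D) = D := by
  obtain ⟨hor, hac, hsr, huniq⟩ := hD
  have hne : r ≠ v := G.ne_of_adj hrv
  have hvout : ∀ w, G.Adj v w → w ≠ r → D v w := fun w hw hwr =>
    (hor.2 v w hw).mpr (fun h => hwr (hQn w h))
  have hrout : ∀ w, G.Adj r w → D r w := fun w hw => source_out hor hsr hw
  funext a b
  apply propext
  constructor
  · rintro ⟨hadj, h | ⟨h1, h2⟩ | ⟨ha, hb, h⟩⟩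
    · subst h; exact hrout b hadj
    · subst h1; exact hvout b hadj h2
    · rcases h with h | ⟨h1, h2⟩
      · exact h
      · subst h1; exact hrout b hadj
  · intro h
    have hadj := hor.1 _ _ h
    refine ⟨hadj, ?_⟩
    by_cases har : a = r
    · exact Or.inl har
    · by_cases hav : a = v
      · exact Or.inr (Or.inl ⟨hav, fun hbr => hsr a (hbr ▸ h)⟩)
      · have hbv : b ≠ v := fun hbv => har (hQn a (hbv ▸ h))
        exact Or.inr (Or.inr ⟨hav, hbv, Or.inl h⟩)

lemma AOcount_split (hrv : G.Adj r v) :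
    AOcount G r = AOcount (G.deleteEdges {s(r,v)}) r +
      AOcount (contrG G r v) ⟨r, G.ne_of_adj hrv⟩ := by
  classical
  have hne : r ≠ v := G.ne_of_adj hrv
  set Q : {D : V → V → Prop // AOP G r D} → Prop := fun D => ∃ u, u ≠ r ∧ D.1 u v with hQ
  have e1 : {x : {D : V → V → Prop // AOP G r D} // Q x} ≃
      {D : V → V → Prop // AOP (G.deleteEdges {s(r,v)}) r D} :=
    { toFun := fun x => ⟨delRel r v x.1.1, del_aop x.1.2 x.2⟩
      invFun := fun y => ⟨⟨addRel r v y.1, add_aop hrv y.2⟩, add_Q hrv y.2⟩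
      left_inv := fun x => by
        apply Subtype.ext; apply Subtype.ext
        exact add_del hrv x.1.2
      right_inv := fun y => Subtype.ext (del_add y.2) }
  have e2 : {x : {D : V → V → Prop // AOP G r D} // ¬ Q x} ≃
      {D' : {x : V // x ≠ v} → {x : V // x ≠ v} → Prop //
        AOP (contrG G r v) ⟨r, G.ne_of_adj hrv⟩ D'} :=
    { toFun := fun x => ⟨pushRel r v x.1.1,
        push_aop hrv x.1.2 (fun u hu => Classical.byContradiction fun h => x.2 ⟨u, h, hu⟩)⟩
      invFun := fun y => ⟨⟨liftRel G r v y.1, lift_aop hrv y.2⟩, by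
        rintro ⟨u, hur, huv⟩
        exact lift_into_v y.1 u hur huv⟩
      left_inv := fun x => by
        apply Subtype.ext; apply Subtype.ext
        exact lift_push hrv x.1.2 (fun u hu => Classical.byContradiction fun h => x.2 ⟨u, h, hu⟩)
      right_inv := fun y => Subtype.ext (push_lift hrv y.2) }
  unfold AOcount
  rw [← Nat.card_congr e1, ← Nat.card_congr e2, ← Nat.card_sum]
  exact Nat.card_congr (Equiv.sumCompl Q).symm

end recN




lemma sum_image_fiber {α β : Type} [DecidableEq α] [DecidableEq β] (S : Finset α) (φ : α → β) :
    ∀ B : Finset β, (∀ b ∈ B, ∃ a ∈ S, φ a = b) →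
      ∑ A ∈ S.powerset.filter (fun A => A.image φ = B), (-1:ℤ)^A.card = (-1)^B.card := by
  intro B
  induction B using Finset.strongInduction with
  | _ B ih =>
    intro hsurj
    rcases Finset.eq_empty_or_nonempty B with rfl | hBne
    · have hset : S.powerset.filter (fun A => A.image φ = ∅) = {∅} := by
        ext A
        simp only [Finset.mem_filter, Finset.mem_powerset, Finset.mem_singleton,
          Finset.image_eq_empty]
        exact ⟨fun h => h.2, fun h => ⟨h ▸ Finset.empty_subset _, h⟩⟩
      rw [hset, Finset.sum_singleton, Finset.card_empty, Finset.card_empty]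
    · -- F(B) = 0
      have hS' : (S.filter (fun a => φ a ∈ B)).Nonempty := by
        obtain ⟨b, hb⟩ := hBne
        obtain ⟨a, ha, hab⟩ := hsurj b hb
        exact ⟨a, Finset.mem_filter.mpr ⟨ha, hab ▸ hb⟩⟩
      have hFset : S.powerset.filter (fun A => A.image φ ⊆ B) =
          (S.filter (fun a => φ a ∈ B)).powerset := by
        ext A
        rw [Finset.mem_filter, Finset.mem_powerset, Finset.mem_powerset]
        constructor
        · rintro ⟨hS, hIm⟩ x hx
          exact Finset.mem_filter.mpr ⟨hS hx, hIm (Finset.mem_image_of_mem φ hx)⟩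
        · intro h
          constructor
          · exact fun x hx => (Finset.mem_filter.mp (h hx)).1
          · intro b hb
            obtain ⟨a, ha, rfl⟩ := Finset.mem_image.mp hb
            exact (Finset.mem_filter.mp (h ha)).2
      have hF : ∑ A ∈ S.powerset.filter (fun A => A.image φ ⊆ B), (-1:ℤ)^A.card = 0 := by
        rw [hFset, Finset.sum_powerset_neg_one_pow_card, if_neg hS'.ne_empty]
      -- fiberwise decomposition of F(B)
      have hmaps : ∀ A ∈ S.powerset.filter (fun A => A.image φ ⊆ B),
          A.image φ ∈ B.powerset := by
        intro A hA
        exact Finset.mem_powerset.mpr (Finset.mem_filter.mp hA).2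
      have hdecomp := Finset.sum_fiberwise_of_maps_to hmaps (fun A => (-1:ℤ)^A.card)
      -- inner fibers
      have hfib : ∀ C ∈ B.powerset,
          (S.powerset.filter (fun A => A.image φ ⊆ B)).filter (fun A => A.image φ = C) =
            S.powerset.filter (fun A => A.image φ = C) := by
        intro C hC
        rw [Finset.filter_filter]
        apply Finset.filter_congr
        intro A hA
        constructor
        · rintro ⟨-, h⟩; exact h
        · intro h; exact ⟨h ▸ Finset.mem_powerset.mp hC, h⟩
      rw [hF] at hdecomp
      -- split off C = B
      have hBmem : B ∈ B.powerset := Finset.mem_powerset_self B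
      rw [← Finset.add_sum_erase _ _ hBmem] at hdecomp
      have hrest : ∑ C ∈ B.powerset.erase B,
          ∑ A ∈ (S.powerset.filter (fun A => A.image φ ⊆ B)).filter
            (fun A => A.image φ = C), (-1:ℤ)^A.card
          = ∑ C ∈ B.powerset.erase B, (-1:ℤ)^C.card := by
        apply Finset.sum_congr rfl
        intro C hC
        have hC' := Finset.mem_of_mem_erase hC
        rw [hfib C hC']
        refine ih C (Finset.ssubset_iff_subset_ne.mpr
          ⟨Finset.mem_powerset.mp hC', Finset.ne_of_mem_erase hC⟩) ?_
        intro b hb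
        exact hsurj b (Finset.mem_powerset.mp hC' hb)
      rw [hrest, hfib B hBmem] at hdecomp
      have hsum_erase : ∑ C ∈ B.powerset.erase B, (-1:ℤ)^C.card = 0 - (-1)^B.card := by
        have := Finset.add_sum_erase _ (fun C : Finset β => (-1:ℤ)^C.card) hBmem
        rw [Finset.sum_powerset_neg_one_pow_card, if_neg hBne.ne_empty] at this
        linarith
      rw [hsum_erase] at hdecomp
      linarith

lemma sum_image_total {α β : Type} [DecidableEq α] [DecidableEq β] (S : Finset α) (φ : α → β)
    (g : Finset β → ℤ) :
    ∑ A ∈ S.powerset, (-1:ℤ)^A.card * g (A.image φ) =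
      ∑ B ∈ (S.image φ).powerset, (-1)^B.card * g B := by
  have hmaps : ∀ A ∈ S.powerset, A.image φ ∈ (S.image φ).powerset := by
    intro A hA
    exact Finset.mem_powerset.mpr (Finset.image_subset_image (Finset.mem_powerset.mp hA))
  rw [← Finset.sum_fiberwise_of_maps_to hmaps (fun A => (-1:ℤ)^A.card * g (A.image φ))]
  apply Finset.sum_congr rfl
  intro B hB
  have h1 : ∑ A ∈ S.powerset.filter (fun A => A.image φ = B), (-1:ℤ)^A.card * g (A.image φ)
      = ∑ A ∈ S.powerset.filter (fun A => A.image φ = B), (-1:ℤ)^A.card * g B := by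
    apply Finset.sum_congr rfl
    intro A hA
    rw [(Finset.mem_filter.mp hA).2]
  rw [h1, ← Finset.sum_mul, sum_image_fiber S φ B ?_]
  · intro b hb
    obtain ⟨a, ha, hab⟩ := Finset.mem_image.mp (Finset.mem_powerset.mp hB hb)
    exact ⟨a, ha, hab⟩


section contr
variable {G : SimpleGraph V} {r v : V}

def pmap (r : V) (hne : r ≠ v) : V → {x : V // x ≠ v} :=
  fun x => if hx : x = v then ⟨r, hne⟩ else ⟨x, hx⟩

lemma pmap_v (hne : r ≠ v) : pmap r hne v = ⟨r, hne⟩ := dif_pos rfl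

lemma pmap_ne (hne : r ≠ v) {x : V} (hx : x ≠ v) : pmap r hne x = ⟨x, hx⟩ := dif_neg hx

lemma pmap_val (hne : r ≠ v) (x' : {x : V // x ≠ v}) : pmap r hne x'.1 = x' := by
  rw [pmap_ne hne x'.2]

/-- generic reachability lift along a vertex map -/
lemma reach_lift {W W' : Type} {H : SimpleGraph W} {K : SimpleGraph W'} (f : W → W')
    (h : ∀ x y, H.Adj x y → K.Reachable (f x) (f y)) {x y : W} (hr : H.Reachable x y) :
    K.Reachable (f x) (f y) := by
  obtain ⟨w⟩ := hr
  induction w with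
  | nil => exact Reachable.refl _
  | cons hadj p ih => exact (h _ _ hadj).trans ih

lemma ES_del (hrv : G.Adj r v) :
    ES (G.deleteEdges {s(r,v)}) = (ES G).erase s(r,v) := by
  ext ε
  rw [mem_ES, SimpleGraph.edgeSet_deleteEdges, Finset.mem_erase, Set.mem_diff,
    Set.mem_singleton_iff, mem_ES]
  tauto

lemma ES_contr (hrv : G.Adj r v) :
    ES (contrG G r v) = ((ES G).erase s(r,v)).image (Sym2.map (pmap r (G.ne_of_adj hrv))) := by
  have hne : r ≠ v := G.ne_of_adj hrv
  ext ε'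
  rw [mem_ES, Finset.mem_image]
  constructor
  · intro hε'
    induction ε' using Sym2.inductionOn with
    | hf a' b' =>
      rw [SimpleGraph.mem_edgeSet] at hε'
      obtain ⟨hvne, hcase⟩ := hε'
      rcases hcase with h | ⟨h1, h2⟩ | ⟨h1, h2⟩
      · refine ⟨s(a'.1, b'.1), ?_, ?_⟩
        · rw [Finset.mem_erase, mem_ES, SimpleGraph.mem_edgeSet]
          refine ⟨?_, h⟩
          intro hcontra
          rcases Sym2.eq_iff.mp hcontra with ⟨h1, h2⟩ | ⟨h1, h2⟩
          · exact b'.2 h2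
          · exact a'.2 h1
        · rw [Sym2.map_pair_eq, pmap_val hne, pmap_val hne]
      · refine ⟨s(v, b'.1), ?_, ?_⟩
        · rw [Finset.mem_erase, mem_ES, SimpleGraph.mem_edgeSet]
          refine ⟨?_, h2⟩
          intro hcontra
          rcases Sym2.eq_iff.mp hcontra with ⟨h3, h4⟩ | ⟨h3, h4⟩
          · exact hne h3.symm
          · exact hvne (h1.trans h4.symm)
        · rw [Sym2.map_pair_eq, pmap_v hne, pmap_val hne]
          rw [Sym2.eq_iff]
          exact Or.inl ⟨Subtype.ext h1.symm, rfl⟩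
      · refine ⟨s(a'.1, v), ?_, ?_⟩
        · rw [Finset.mem_erase, mem_ES, SimpleGraph.mem_edgeSet]
          refine ⟨?_, h2⟩
          intro hcontra
          rcases Sym2.eq_iff.mp hcontra with ⟨h3, h4⟩ | ⟨h3, h4⟩
          · exact hvne (h3.trans h1.symm)
          · exact hne h4.symm
        · rw [Sym2.map_pair_eq, pmap_v hne, pmap_val hne]
          rw [Sym2.eq_iff]
          exact Or.inl ⟨rfl, Subtype.ext h1.symm⟩
  · rintro ⟨ε, hε, rfl⟩
    rw [Finset.mem_erase, mem_ES] at hε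
    obtain ⟨hεne, hεmem⟩ := hε
    induction ε using Sym2.inductionOn with
    | hf x y =>
      rw [SimpleGraph.mem_edgeSet] at hεmem
      rw [Sym2.map_pair_eq, SimpleGraph.mem_edgeSet]
      by_cases hxv : x = v
      · have hyv : y ≠ v := fun h => G.ne_of_adj hεmem (hxv.trans h.symm)
        have hyr : y ≠ r := by
          intro h
          apply hεne
          rw [Sym2.eq_iff]
          exact Or.inr ⟨hxv, h⟩
        rw [hxv, pmap_v hne, pmap_ne hne hyv]
        exact ⟨fun h => hyr h.symm, Or.inr (Or.inl ⟨rfl, hxv ▸ hεmem⟩)⟩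
      · by_cases hyv : y = v
        · have hxr : x ≠ r := by
            intro h
            apply hεne
            rw [Sym2.eq_iff]
            exact Or.inl ⟨h, hyv⟩
          rw [hyv, pmap_v hne, pmap_ne hne hxv]
          exact ⟨hxr, Or.inr (Or.inr ⟨rfl, hyv ▸ hεmem⟩)⟩
        · rw [pmap_ne hne hxv, pmap_ne hne hyv]
          exact ⟨G.ne_of_adj hεmem, Or.inl hεmem⟩
lemma conn_contr (hrv : G.Adj r v) {A' : Finset (Sym2 V)} (hA' : A' ⊆ (ES G).erase s(r,v)) :
    (fromEdgeSet (↑(insert s(r,v) A') : Set (Sym2 V))).Connected ↔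
      (fromEdgeSet (↑(A'.image (Sym2.map (pmap r (G.ne_of_adj hrv)))) :
        Set (Sym2 {x : V // x ≠ v}))).Connected := by
  have hne : r ≠ v := G.ne_of_adj hrv
  set H := fromEdgeSet (↑(insert s(r,v) A') : Set (Sym2 V)) with hH
  set K := fromEdgeSet (↑(A'.image (Sym2.map (pmap r hne))) : Set (Sym2 {x : V // x ≠ v}))
    with hK
  have henotin : s(r,v) ∉ A' := fun h => (Finset.notMem_erase _ _) (hA' h)
  have hHe : H.Adj r v := by
    rw [hH, fromEdgeSet_adj]
    exact ⟨by rw [Finset.coe_insert]; exact Set.mem_insert _ _, hne⟩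
  have hH2 : ∀ z, H.Reachable z (pmap r hne z).1 := by
    intro z
    by_cases hz : z = v
    · rw [hz, pmap_v hne]
      exact hHe.symm.reachable
    · rw [pmap_ne hne hz]
  have hfwd : ∀ x y, H.Adj x y → K.Reachable (pmap r hne x) (pmap r hne y) := by
    intro x y hxy
    rw [hH, fromEdgeSet_adj] at hxy
    obtain ⟨hmem, hxyne⟩ := hxy
    rw [Finset.coe_insert, Set.mem_insert_iff] at hmem
    rcases hmem with heq | hmem
    · rcases Sym2.eq_iff.mp heq with ⟨h1, h2⟩ | ⟨h1, h2⟩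
      · rw [h1, h2, pmap_v hne, pmap_ne hne hne]
      · rw [h1, h2, pmap_v hne, pmap_ne hne hne]
    · apply SimpleGraph.Adj.reachable
      rw [hK, fromEdgeSet_adj]
      constructor
      · rw [Finset.coe_image, ← Sym2.map_pair_eq]
        exact Set.mem_image_of_mem _ hmem
      · intro hpq
        by_cases hxv : x = v
        · by_cases hyv : y = v
          · exact hxyne (hxv.trans hyv.symm)
          · rw [hxv, pmap_v hne, pmap_ne hne hyv] at hpq
            have : r = y := congrArg Subtype.val hpq
            apply henotin
            have : s(x,y) = s(r,v) := by
              rw [Sym2.eq_iff]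
              exact Or.inr ⟨hxv, this.symm⟩
            rwa [← this]
        · by_cases hyv : y = v
          · rw [hyv, pmap_v hne, pmap_ne hne hxv] at hpq
            have hxr : x = r := congrArg Subtype.val hpq
            apply henotin
            have heq2 : s(x,y) = s(r,v) := by
              rw [Sym2.eq_iff]
              exact Or.inl ⟨hxr, hyv⟩
            rwa [← heq2]
          · rw [pmap_ne hne hxv, pmap_ne hne hyv] at hpq
            exact hxyne (congrArg Subtype.val hpq)
  have hbwd : ∀ (x' y' : {x : V // x ≠ v}), K.Adj x' y' → H.Reachable x'.1 y'.1 := by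
    intro x' y' hxy
    rw [hK, fromEdgeSet_adj] at hxy
    obtain ⟨hmem, hne'⟩ := hxy
    rw [Finset.coe_image] at hmem
    obtain ⟨ε, hε, hφ⟩ := hmem
    revert hφ
    induction ε using Sym2.inductionOn with
    | hf x y =>
      intro hφ
      have hεG : G.Adj x y := by
        have := hA' (Finset.mem_coe.mp hε)
        rw [Finset.mem_erase, mem_ES, SimpleGraph.mem_edgeSet] at this
        exact this.2
      have hHxy : H.Adj x y := by
        rw [hH, fromEdgeSet_adj]
        refine ⟨by rw [Finset.coe_insert]; exact Set.mem_insert_of_mem _ hε, G.ne_of_adj hεG⟩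
      rw [Sym2.map_pair_eq] at hφ
      have key : ∀ (a b : V), H.Adj a b → ∀ (a0 b0 : {x : V // x ≠ v}),
          pmap r hne a = a0 → pmap r hne b = b0 → H.Reachable a0.1 b0.1 := by
        intro a b hab a0 b0 ha0 hb0
        have h1 : H.Reachable a0.1 a := by
          rw [← ha0]
          exact (hH2 a).symm
        have h2 : H.Reachable b b0.1 := by
          rw [← hb0]
          exact hH2 b
        exact (h1.trans hab.reachable).trans h2
      rcases Sym2.eq_iff.mp hφ with ⟨h1, h2⟩ | ⟨h1, h2⟩
      · exact key x y hHxy x' y' h1 h2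
      · exact key y x hHxy.symm x' y' h2 h1
  constructor
  · intro hc
    haveI : Nonempty {x : V // x ≠ v} := ⟨⟨r, hne⟩⟩
    refine ⟨fun x' y' => ?_⟩
    have := reach_lift (pmap r hne) hfwd (hc.preconnected x'.1 y'.1)
    rwa [pmap_val hne, pmap_val hne] at this
  · intro hc
    haveI : Nonempty V := ⟨r⟩
    refine ⟨fun x y => ?_⟩
    have h1 := hc.preconnected (pmap r hne x) (pmap r hne y)
    have h2 := reach_lift Subtype.val hbwd h1
    exact ((hH2 x).trans h2).trans (hH2 y).symm
end contr




lemma SInt_split {G : SimpleGraph V} {r v : V} (hrv : G.Adj r v) :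
    SInt G = SInt (G.deleteEdges {s(r,v)}) - SInt (contrG G r v) := by
  have hne : r ≠ v := G.ne_of_adj hrv
  have heES : s(r,v) ∈ ES G := mem_ES.mpr (G.mem_edgeSet.mpr hrv)
  have hins : insert s(r,v) ((ES G).erase s(r,v)) = ES G := Finset.insert_erase heES
  have henotin : s(r,v) ∉ (ES G).erase s(r,v) := Finset.notMem_erase _ _
  rw [SInt, ← hins, Finset.sum_powerset_insert henotin]
  have h1 : ∑ A ∈ ((ES G).erase s(r,v)).powerset, (if econn A then (-1:ℤ)^A.card else 0)
      = SInt (G.deleteEdges {s(r,v)}) := by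
    rw [SInt, ES_del hrv]
  have h2 : ∀ A ∈ ((ES G).erase s(r,v)).powerset,
      (if econn (insert s(r,v) A) then (-1:ℤ)^(insert s(r,v) A).card else 0)
      = -((-1:ℤ)^A.card *
          (if econn (A.image (Sym2.map (pmap r (G.ne_of_adj hrv)))) then 1 else 0)) := by
    intro A hA
    rw [Finset.mem_powerset] at hA
    have hAe : s(r,v) ∉ A := fun h => henotin (hA h)
    rw [Finset.card_insert_of_notMem hAe]
    have hiff : econn (insert s(r,v) A) ↔
        econn (A.image (Sym2.map (pmap r (G.ne_of_adj hrv)))) := conn_contr hrv hA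
    by_cases h : econn (insert s(r,v) A)
    · rw [if_pos h, if_pos (hiff.mp h), pow_succ]
      ring
    · rw [if_neg h, if_neg (fun hh => h (hiff.mpr hh))]
      ring
  rw [h1, Finset.sum_congr rfl h2, Finset.sum_neg_distrib,
    sum_image_total ((ES G).erase s(r,v)) (Sym2.map (pmap r (G.ne_of_adj hrv)))
      (fun B => if econn B then 1 else 0)]
  rw [← ES_contr hrv]
  have h3 : ∀ B ∈ (ES (contrG G r v)).powerset,
      (-1:ℤ)^B.card * (if econn B then 1 else 0) = (if econn B then (-1:ℤ)^B.card else 0) := by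
    intro B _
    by_cases h : econn B
    · rw [if_pos h, if_pos h, mul_one]
    · rw [if_neg h, if_neg h, mul_zero]
  rw [Finset.sum_congr rfl h3, ← SInt]
  ring

lemma aop_connected {G : SimpleGraph V} {r : V} {D : V → V → Prop} (hD : AOP G r D) :
    G.Connected := by
  have hroot := rootconn_of_unique hD.2.1 hD.2.2.2
  haveI : Nonempty V := ⟨r⟩
  have key : ∀ z, G.Reachable r z := by
    intro z
    have h := hroot z
    induction h with
    | refl => exact Reachable.refl _
    | tail h1 h2 ih => exact ih.trans (hD.1.1 _ _ h2).reachable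
  exact ⟨fun x y => (key x).symm.trans (key y)⟩

lemma AOcount_disconnected {G : SimpleGraph V} {r : V} (h : ¬ G.Connected) :
    AOcount G r = 0 := by
  haveI : IsEmpty {D : V → V → Prop // AOP G r D} := ⟨fun D => h (aop_connected D.2)⟩
  exact Nat.card_of_isEmpty

lemma SInt_disconnected {G : SimpleGraph V} (h : ¬ G.Connected) : SInt G = 0 := by
  rw [SInt]
  apply Finset.sum_eq_zero
  intro A hA
  rw [Finset.mem_powerset] at hA
  rw [if_neg]
  intro hc
  apply h
  have hle : fromEdgeSet (↑A : Set (Sym2 V)) ≤ G := by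
    rw [← SimpleGraph.fromEdgeSet_edgeSet G]
    apply SimpleGraph.fromEdgeSet_mono
    intro x hx
    exact mem_ES.mp (hA hx)
  exact hc.mono hle

lemma AOcount_subsingleton {G : SimpleGraph V} {r : V} (h1 : ∀ w : V, w = r) :
    AOcount G r = 1 := by
  have hnoadj : ∀ a b : V, ¬ G.Adj a b := fun a b h =>
    G.ne_of_adj h ((h1 a).trans (h1 b).symm)
  rw [AOcount, Nat.card_eq_one_iff_unique]
  constructor
  · constructor
    intro D E
    apply Subtype.ext
    funext a b
    exact propext (iff_of_false (fun h => hnoadj a b (D.2.1.1 a b h))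
      (fun h => hnoadj a b (E.2.1.1 a b h)))
  · refine ⟨⟨fun _ _ => False, ⟨fun a b h => h.elim, fun a b hab => ((hnoadj a b) hab).elim⟩,
      ?_, fun u h => h, fun w _ => h1 w⟩⟩
    intro a h
    cases h with
    | single h => exact h
    | tail _ h => exact h

lemma ES_subsingleton {G : SimpleGraph V} {r : V} (h1 : ∀ w : V, w = r) : ES G = ∅ := by
  ext ε
  simp only [Finset.notMem_empty, iff_false]
  intro hε
  induction ε using Sym2.inductionOn with
  | hf x y =>
    have := G.mem_edgeSet.mp (mem_ES.mp hε)
    exact G.ne_of_adj this ((h1 x).trans (h1 y).symm)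

lemma SInt_subsingleton {G : SimpleGraph V} {r : V} (h1 : ∀ w : V, w = r) : SInt G = 1 := by
  rw [SInt, ES_subsingleton h1, Finset.powerset_empty, Finset.sum_singleton]
  rw [if_pos, Finset.card_empty, pow_zero]
  show (fromEdgeSet (↑(∅ : Finset (Sym2 V)) : Set (Sym2 V))).Connected
  rw [Finset.coe_empty, SimpleGraph.fromEdgeSet_empty]
  haveI : Nonempty V := ⟨r⟩
  refine ⟨fun x y => ?_⟩
  rw [(h1 x).trans (h1 y).symm]

theorem main_count : ∀ (m : ℕ) (V : Type) [Fintype V] (G : SimpleGraph V) (r : V),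
    (ES G).card = m → ((AOcount G r : ℤ) = (-1)^(Fintype.card V - 1) * SInt G) := by
  intro m
  induction m using Nat.strong_induction_on with
  | _ m ih =>
    intro V _ G r hm
    by_cases hadj : ∃ x, G.Adj r x
    · obtain ⟨v, hrv⟩ := hadj
      have hne : r ≠ v := G.ne_of_adj hrv
      have heES : s(r,v) ∈ ES G := mem_ES.mpr (G.mem_edgeSet.mpr hrv)
      have hm1 : 1 ≤ m := hm ▸ Finset.card_pos.mpr ⟨_, heES⟩
      have hcard_del : (ES (G.deleteEdges {s(r,v)})).card < m := by
        rw [ES_del hrv, Finset.card_erase_of_mem heES, hm]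
        omega
      have hcard_con : (ES (contrG G r v)).card < m := by
        rw [ES_contr hrv]
        calc (((ES G).erase s(r,v)).image (Sym2.map (pmap r (G.ne_of_adj hrv)))).card
            ≤ ((ES G).erase s(r,v)).card := Finset.card_image_le
          _ = m - 1 := by rw [Finset.card_erase_of_mem heES, hm]
          _ < m := by omega
      have IH1 := ih _ hcard_del V (G.deleteEdges {s(r,v)}) r rfl
      have IH2 := ih _ hcard_con {x : V // x ≠ v} (contrG G r v) ⟨r, hne⟩ rfl
      have hn2 : 2 ≤ Fintype.card V := Fintype.one_lt_card_iff.mpr ⟨r, v, hne⟩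
      have hcard' : Fintype.card {x : V // x ≠ v} = Fintype.card V - 1 := by
        rw [Fintype.card_subtype_compl, Fintype.card_subtype_eq]
      rw [AOcount_split hrv, SInt_split hrv]
      push_cast
      rw [IH1, IH2, hcard']
      have hpow : (-1:ℤ)^(Fintype.card V - 1) = -(-1)^(Fintype.card V - 1 - 1) := by
        have hk : Fintype.card V - 1 = (Fintype.card V - 1 - 1) + 1 := by omega
        conv_lhs => rw [hk]
        rw [pow_succ]
        ring
      rw [hpow]
      ring
    · by_cases hcon : G.Connected
      · have h1 : ∀ w : V, w = r := by
          intro w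
          by_contra hw
          obtain ⟨p⟩ := hcon.preconnected r w
          cases p with
          | nil => exact hw rfl
          | cons h q => exact hadj ⟨_, h⟩
        rw [AOcount_subsingleton h1, SInt_subsingleton h1]
        have : Fintype.card V = 1 := Fintype.card_eq_one_iff.mpr ⟨r, h1⟩
        rw [this]
        norm_num
      · rw [AOcount_disconnected hcon, SInt_disconnected hcon]
        norm_num

end GZaux

/-- Greene–Zaslavsky: for a connected graph rooted at `r`, `T_G(1,0)` counts the
acyclic orientations whose unique source is `r`. -/
theorem statement11 {V : Type} [Fintype V] (G : SimpleGraph V) (hG : G.Connected)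
    (r : V) :
    (Nat.card {D : V → V → Prop // IsOrientation G D ∧ DAcyclic D ∧
        IsSource D r ∧ ∀ v, IsSource D v → v = r} : ℤ) = tutteG G 1 0 := by
  rw [tutte_eval G hG]
  exact main_count (ES G).card V G r rfl

end
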